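/- arXiv:2603.19465 — 2 statements merged into one kernel-verified Lean document; each statement's English description precedes it below -/
import Mathlib

section
/- For any real square matrix A and any orthogonal matrix O, one has Tr(OᵀA) ≤ Tr((AᵀA)^{1/2}). -/
open Matrix Real Filter

noncomputable def msqrt {N : ℕ} (A : Matrix (Fin N) (Fin N) ℝ) : Matrix (Fin N) (Fin N) ℝ :=
  letI := Classical.dec A.PosSemidef
  if h : A.PosSemidef then h.1.eigenvectorUnitary.1 * diagonal ((↑) ∘ (√·) ∘ h.1.eigenvalues) *
    (star h.1.eigenvectorUnitary : Matrix (Fin N) (Fin N) ℝ) else 0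

noncomputable def dhalf {N : ℕ} (v : Fin N → ℝ) : Matrix (Fin N) (Fin N) ℝ :=
  Matrix.diagonal fun i => Real.sqrt (v i)

/-- Cauchy–Schwarz for the real dot product. -/
lemma dot_cs {N : ℕ} (v w : Fin N → ℝ) :
    v ⬝ᵥ w ≤ Real.sqrt (v ⬝ᵥ v) * Real.sqrt (w ⬝ᵥ w) := by
  have h := Finset.sum_mul_sq_le_sq_mul_sq Finset.univ v w
  have hvv : (0:ℝ) ≤ v ⬝ᵥ v := by
    simp only [dotProduct]
    exact Finset.sum_nonneg fun i _ => mul_self_nonneg _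
  calc v ⬝ᵥ w ≤ |v ⬝ᵥ w| := le_abs_self _
    _ = Real.sqrt ((v ⬝ᵥ w) ^ 2) := (Real.sqrt_sq_eq_abs _).symm
    _ ≤ Real.sqrt ((v ⬝ᵥ v) * (w ⬝ᵥ w)) := by
        apply Real.sqrt_le_sqrt
        simpa [dotProduct, pow_two] using h
    _ = Real.sqrt (v ⬝ᵥ v) * Real.sqrt (w ⬝ᵥ w) := Real.sqrt_mul hvv _

lemma dot_mulVec_self {N : ℕ} (M : Matrix (Fin N) (Fin N) ℝ) (v : Fin N → ℝ) :
    (M *ᵥ v) ⬝ᵥ (M *ᵥ v) = v ⬝ᵥ ((Mᵀ * M) *ᵥ v) := by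
  rw [Matrix.dotProduct_mulVec, ← Matrix.mulVec_transpose, Matrix.mulVec_mulVec,
    dotProduct_comm]

theorem stmt_3 {N : ℕ} (A O : Matrix (Fin N) (Fin N) ℝ) (hO : Oᵀ * O = 1) :
    (Oᵀ * A).trace ≤ (msqrt (Aᵀ * A)).trace := by
  have hPSD : (Aᵀ * A).PosSemidef := by
    simpa using Matrix.posSemidef_conjTranspose_mul_self A
  have hmsqrt : msqrt (Aᵀ * A) =
      hPSD.1.eigenvectorUnitary.1 * diagonal ((↑) ∘ (√·) ∘ hPSD.1.eigenvalues) *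
      (star hPSD.1.eigenvectorUnitary : Matrix (Fin N) (Fin N) ℝ) := by
    simp [msqrt, hPSD]
  have hH : (Aᵀ * A).IsHermitian := hPSD.1
  set U : Matrix (Fin N) (Fin N) ℝ := (hH.eigenvectorUnitary : Matrix (Fin N) (Fin N) ℝ)
    with hUdef
  have hU1 : U * star U = 1 := (Matrix.mem_unitaryGroup_iff).mp hH.eigenvectorUnitary.2
  -- trace of sqrt is the sum of square roots of eigenvalues
  have htr_sqrt : (U * diagonal ((fun x => x) ∘ (fun x => √x) ∘ hPSD.1.eigenvalues) * star U).trace =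
       ∑ i, Real.sqrt (hH.eigenvalues i) := by
    rw [Matrix.trace_mul_cycle,
      (Matrix.mem_unitaryGroup_iff').mp hH.eigenvectorUnitary.2, Matrix.one_mul, Matrix.trace_diagonal]
    simp
  -- rotate the trace of OᵀA
  have htr_rot : (Oᵀ * A).trace = (star U * (Oᵀ * A) * U).trace := by
    rw [Matrix.trace_mul_cycle, ← Matrix.mul_assoc, hU1, Matrix.one_mul]
  have hOOT : O * Oᵀ = 1 := by
    rw [mul_eq_one_comm] at hO; exact hO
  rw [htr_rot, hmsqrt, htr_sqrt, Matrix.trace]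
  apply Finset.sum_le_sum
  intro i _
  set u : Fin N → ℝ := ⇑(hH.eigenvectorBasis i) with hu
  have hstarU : ∀ j, (star U) i j = u j := by
    intro j
    rw [Matrix.star_apply, star_trivial, hUdef, Matrix.IsHermitian.eigenvectorUnitary_apply]
  have hUcol : ∀ k, U k i = u k := by
    intro k
    rw [hUdef, Matrix.IsHermitian.eigenvectorUnitary_apply]
  have hdiag : (star U * (Oᵀ * A) * U).diag i = u ⬝ᵥ ((Oᵀ * A) *ᵥ u) := by
    rw [Matrix.diag_apply, Matrix.mul_assoc, Matrix.mul_apply]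
    simp only [dotProduct, Matrix.mulVec, Matrix.mul_apply, hstarU, hUcol]
  rw [hdiag]
  -- eigenvector facts
  have huu : u ⬝ᵥ u = 1 := by
    have hn := hH.eigenvectorBasis.orthonormal.1 i
    have h2 : (inner ℝ (hH.eigenvectorBasis i) (hH.eigenvectorBasis i) : ℝ) = 1 := by
      rw [real_inner_self_eq_norm_sq, hn]; norm_num
    rw [← h2]
    rw [PiLp.inner_apply]
    simp [dotProduct, hu, mul_comm, pow_two]
  have hkey : u ⬝ᵥ ((Aᵀ * A) *ᵥ u) = hH.eigenvalues i := by
    have h2 : (Aᵀ * A) *ᵥ u = hH.eigenvalues i • u := by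
      simpa [hu] using hH.mulVec_eigenvectorBasis i
    rw [h2, dotProduct_smul, huu]
    simp
  have hOAu : ((Oᵀ * A) *ᵥ u) ⬝ᵥ ((Oᵀ * A) *ᵥ u) = hH.eigenvalues i := by
    rw [dot_mulVec_self]
    have h3 : (Oᵀ * A)ᵀ * (Oᵀ * A) = Aᵀ * A := by
      rw [Matrix.transpose_mul, Matrix.transpose_transpose, Matrix.mul_assoc,
        ← Matrix.mul_assoc O, hOOT, Matrix.one_mul]
    rw [h3, hkey]
  calc u ⬝ᵥ ((Oᵀ * A) *ᵥ u)
      ≤ Real.sqrt (u ⬝ᵥ u) * Real.sqrt (((Oᵀ * A) *ᵥ u) ⬝ᵥ ((Oᵀ * A) *ᵥ u)) := dot_cs _ _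
    _ = Real.sqrt (hH.eigenvalues i) := by rw [huu, hOAu]; simp
end

section
/- For any c > 0 and v > 0, let v_new = c√v. Then (2c√v_new - v_new) - (2c√v - v) = c²·z(z-1)²(z+2) ≥ 0, where z = (v/c²)^{1/4}; equality holds if and only if v = c². -/
theorem stmt_11 (c v : ℝ) (hc : 0 < c) (hv : 0 < v) :
    (2 * c * Real.sqrt (c * Real.sqrt v) - c * Real.sqrt v) - (2 * c * Real.sqrt v - v) =
      c ^ 2 * ((v / c ^ 2) ^ ((1 : ℝ) / 4) *
        ((v / c ^ 2) ^ ((1 : ℝ) / 4) - 1) ^ 2 * ((v / c ^ 2) ^ ((1 : ℝ) / 4) + 2)) ∧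
    0 ≤ (2 * c * Real.sqrt (c * Real.sqrt v) - c * Real.sqrt v) - (2 * c * Real.sqrt v - v) ∧
    ((2 * c * Real.sqrt (c * Real.sqrt v) - c * Real.sqrt v) - (2 * c * Real.sqrt v - v) = 0 ↔
      v = c ^ 2) := by
  set z : ℝ := (v / c ^ 2) ^ ((1 : ℝ) / 4) with hzdef
  have hpos : 0 < v / c ^ 2 := by positivity
  have hz : 0 < z := Real.rpow_pos_of_pos hpos _
  have hz4 : z ^ (4 : ℕ) = v / c ^ 2 := by
    rw [hzdef, ← Real.rpow_natCast _ 4, ← Real.rpow_mul hpos.le]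
    norm_num
  have hvz : v = c ^ 2 * z ^ 4 := by
    field_simp at hz4; linarith [hz4]
  have hsv : Real.sqrt v = c * z ^ 2 := by
    have : v = (c * z ^ 2) ^ 2 := by rw [hvz]; ring
    rw [this, Real.sqrt_sq (by positivity)]
  have hsv2 : Real.sqrt (c * Real.sqrt v) = c * z := by
    rw [hsv]
    have : c * (c * z ^ 2) = (c * z) ^ 2 := by ring
    rw [this, Real.sqrt_sq (by positivity)]
  rw [hsv2, hsv, hvz]
  refine ⟨by ring, ?_, ?_⟩
  · nlinarith [sq_nonneg (z - 1), sq_nonneg z, mul_pos hc hc, sq_nonneg (z*(z-1)), sq_nonneg (c*(z-1))]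
  · constructor
    · intro h
      have hc2 : (0:ℝ) < c ^ 2 := by positivity
      have h2 : z * (z - 1) ^ 2 * (z + 2) = 0 := by
        have h2' : c ^ 2 * (z * (z - 1) ^ 2 * (z + 2)) = 0 := by linear_combination h
        exact (mul_eq_zero.mp h2').resolve_left (by positivity)
      have h4 : (z - 1) ^ 2 = 0 := by
        nlinarith [sq_nonneg (z - 1), mul_pos hz (by linarith : (0:ℝ) < z + 2)]
      have hz1 : z = 1 := by have := sq_eq_zero_iff.mp h4; linarith
      rw [hz1]; ring
    · intro h
      have hz41 : z ^ 4 = 1 := by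
        have hc2 : (c : ℝ) ^ 2 ≠ 0 := by positivity
        exact mul_left_cancel₀ hc2 (by linarith [h])
      have h21 : z ^ 2 = 1 := by nlinarith [sq_nonneg (z ^ 2 - 1)]
      have hz1 : z = 1 := by nlinarith [sq_nonneg (z - 1)]
      rw [hz1]; ring
end
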